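/- Let d ≥ 1, k ≥ 1 and n = dk. Let N_1, …, N_d ∈ ℂ^{k×k} with N_d upper triangular, and let T ∈ ℂ^{n×n} be the associated block upper triangular matrix. Then there exist vectors w_1, …, w_k ∈ ℂ^n with w_j(i) = 0 for every i > n+1−j such that T = T_1 T_2 ⋯ T_k, where T_j = I_n + w_j e_{n+1−j}^T; in particular each factor T_j is upper triangular and of identity-plus-spike form (the identity plus a rank-one matrix with a single nonzero column). -/
import Mathlib


open Matrix

noncomputable section

/-- The `dk × dk` block upper triangular matrix built from `N 1, …, N d`:
identity blocks on the block diagonal except the last, and `N (i+1)` in block row `i`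
(0-based) of the last block column. -/
def blockT (d k : ℕ) (hk : 0 < k) (N : ℕ → Matrix (Fin k) (Fin k) ℂ) :
    Matrix (Fin (d * k)) (Fin (d * k)) ℂ :=
  fun p q =>
    if (q : ℕ) < (d - 1) * k then (if p = q then 1 else 0)
    else N ((p : ℕ) / k + 1) ⟨(p : ℕ) % k, Nat.mod_lt _ hk⟩ ⟨(q : ℕ) % k, Nat.mod_lt _ hk⟩

lemma vmv_mul_vmv {n : ℕ} (u : Fin n → ℂ) (c c' : Fin n) (v : Fin n → ℂ)
    (h : v c = 0) :
    vecMulVec u (Pi.single c 1) * vecMulVec v (Pi.single c' 1) = 0 := by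
  ext p q
  simp only [mul_apply, vecMulVec_apply, Matrix.zero_apply, Pi.single_apply]
  rw [Finset.sum_eq_zero]
  intro r _
  by_cases hr : r = c <;> simp [hr, h]

lemma prod_one_add_spike {n k : ℕ} (w : Fin k → Fin n → ℂ) (c : Fin k → Fin n)
    (L : List (Fin k)) (h : L.Pairwise (fun a b => w b (c a) = 0)) :
    (L.map (fun j => (1 : Matrix (Fin n) (Fin n) ℂ)
        + vecMulVec (w j) (Pi.single (c j) 1))).prod
      = 1 + (L.map (fun j => vecMulVec (w j) (Pi.single (c j) 1))).sum := by
  induction L with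
  | nil => simp
  | cons a t ih =>
    rw [List.pairwise_cons] at h
    simp only [List.map_cons, List.prod_cons, List.sum_cons, ih h.2]
    rw [add_mul, one_mul, mul_add, mul_one]
    have : vecMulVec (w a) (Pi.single (c a) 1) *
        (t.map (fun j => vecMulVec (w j) (Pi.single (c j) 1))).sum = 0 := by
      rw [← List.sum_map_mul_left, List.sum_eq_zero]
      intro x hx
      simp only [List.mem_map] at hx
      obtain ⟨b, hb, rfl⟩ := hx
      exact vmv_mul_vmv _ _ _ _ (h.1 b hb)
    rw [this]
    abel

/-- **Gaussian factorization.**  If `N d` is upper triangular, `T` factors as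
`T₁ T₂ ⋯ T_k` with `T_j = I + w_j e_{n+1−j}ᵀ` upper triangular identity-plus-spike
matrices (the spike of the `j`-th factor, `j` 1-based, sits in column `n + 1 − j` and its
entries below the diagonal vanish). -/
theorem gaussian_factorization (d k : ℕ) (hd : 1 ≤ d) (hk : 1 ≤ k)
    (N : ℕ → Matrix (Fin k) (Fin k) ℂ)
    (hNd : ∀ i j : Fin k, j < i → N d i j = 0) :
    ∃ w : Fin k → (Fin (d * k) → ℂ),
      (∀ (j : Fin k) (i : Fin (d * k)), d * k ≤ (i : ℕ) + (j : ℕ) → w j i = 0) ∧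
      blockT d k hk N =
        ((List.finRange k).map (fun j =>
          1 + vecMulVec (w j)
            (Pi.single
              (⟨d * k - 1 - (j : ℕ), by have := Nat.mul_pos hd hk; omega⟩ : Fin (d * k))
              1))).prod := by
  have hn : 0 < d * k := Nat.mul_pos hd hk
  set n := d * k with hndef
  have hdk1 : (d - 1) * k = n - k := by
    rw [Nat.sub_mul, one_mul]
  have hdk2 : k ≤ n := by
    calc k = 1 * k := (one_mul k).symm
    _ ≤ d * k := Nat.mul_le_mul_right k hd
  set c : Fin k → Fin n := fun j => ⟨n - 1 - (j : ℕ), by omega⟩ with hc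
  set w : Fin k → Fin n → ℂ := fun j i =>
    blockT d k hk N i (c j) - (if i = c j then 1 else 0) with hw
  have hck : ∀ j : Fin k, (d - 1) * k ≤ ((c j : ℕ)) := by
    intro j
    have hj := j.isLt
    have h1 : (c j : ℕ) = n - 1 - (j : ℕ) := rfl
    omega
  have hdivmod : ∀ m : ℕ, (d - 1) * k ≤ m → m < n →
      m / k = d - 1 ∧ m % k = m - (d - 1) * k := by
    intro m h1 h2
    have h3 : (d - 1 + 1) * k = n := by
      have : d - 1 + 1 = d := by omega
      rw [this]
    have hdiv : m / k = d - 1 := Nat.div_eq_of_lt_le h1 (by omega)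
    have := Nat.div_add_mod m k
    rw [hdiv] at this
    have hcm : k * (d - 1) = (d - 1) * k := mul_comm _ _
    exact ⟨hdiv, by omega⟩
  -- support property
  have hsupp : ∀ (j : Fin k) (i : Fin n), n ≤ (i : ℕ) + (j : ℕ) → w j i = 0 := by
    intro j i hij
    have hi := i.isLt
    have hj := j.isLt
    have hcj : (c j : ℕ) = n - 1 - (j : ℕ) := rfl
    have hine : i ≠ c j := by
      intro h
      have : (i : ℕ) = n - 1 - (j : ℕ) := congrArg Fin.val h
      omega
    have hcjk : ¬ ((c j : ℕ) < (d - 1) * k) := not_lt.mpr (hck j)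
    simp only [hw, blockT, hcjk, if_false, if_neg hine, sub_zero]
    have hik : (d - 1) * k ≤ (i : ℕ) := by omega
    obtain ⟨hdiv, hmod⟩ := hdivmod (i : ℕ) hik hi
    obtain ⟨_, hmodc⟩ := hdivmod (c j : ℕ) (hck j) (c j).isLt
    rw [hdiv]
    have hd1 : d - 1 + 1 = d := by omega
    rw [hd1]
    apply hNd
    show ((c j : ℕ) % k) < ((i : ℕ) % k)
    omega
  refine ⟨w, hsupp, ?_⟩
  rw [prod_one_add_spike w c (List.finRange k) ?_]
  · -- equality with 1 + sum
    rw [← Fin.sum_univ_def]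
    ext p q
    simp only [Matrix.add_apply, Matrix.sum_apply, vecMulVec_apply, Pi.single_apply,
      Matrix.one_apply]
    by_cases hq : (q : ℕ) < (d - 1) * k
    · rw [Finset.sum_eq_zero, add_zero, blockT, if_pos hq]
      intro j _
      have : q ≠ c j := by
        intro h
        have := hck j
        omega
      simp [this]
    · -- q is in the last block column
      have hq1 := q.isLt
      set j0 : Fin k := ⟨n - 1 - (q : ℕ), by omega⟩ with hj0
      have hcq : c j0 = q := by
        apply Fin.ext
        show n - 1 - (n - 1 - (q : ℕ)) = (q : ℕ)
        omega
      rw [Finset.sum_eq_single j0]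
      · rw [hcq]
        simp only [if_pos rfl, mul_one]
        rw [hw]
        simp only
        rw [hcq]
        by_cases hpq : p = q <;> simp [hpq]
      · intro b _ hb
        have : q ≠ c b := by
          intro h
          apply hb
          apply Fin.ext
          have h1 : (q : ℕ) = n - 1 - (b : ℕ) := congrArg Fin.val h
          have hbk := b.isLt
          show (b : ℕ) = n - 1 - (q : ℕ)
          omega
        simp [this]
      · intro h
        exact absurd (Finset.mem_univ j0) h
  · -- pairwise
    apply List.Pairwise.imp_of_mem ?_ (List.pairwise_lt_finRange k)
    intro a b _ _ hab
    apply hsupp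
    have ha := a.isLt
    have h1 : (c a : ℕ) = n - 1 - (a : ℕ) := rfl
    omega
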